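/- In a complete structured DNNF, for any two gates g₁ and g₂ lying in distinct boxes (i.e., mapped by the structuring function to distinct v-tree nodes), if both are var-gates or ×-gates, then the captured sets S(g₁) and S(g₂) are disjoint. -/
import Mathlib


/-- Positions in binary trees (paths from the root; `false` = left, `true` = right). -/
abbrev BPos := List Bool

inductive GateType where
  | top | bot | var | times | cup
deriving DecidableEq

/-- A set circuit: a DAG of gates typed ⊤, ⊥, var, ×, ∪.  `wire g' g` means `g'` is an
input of `g`. -/
structure SetCircuit (V G : Type) where
  gtype : G → GateType
  wire : G → G → Prop
  varLabel : G → Set V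
  varLabel_inj : ∀ g g', gtype g = GateType.var → gtype g' = GateType.var →
      varLabel g = varLabel g' → g = g'
  source_no_input : ∀ g, (gtype g = GateType.top ∨ gtype g = GateType.bot ∨
      gtype g = GateType.var) → ∀ g', ¬ wire g' g
  const_no_output : ∀ g, (gtype g = GateType.top ∨ gtype g = GateType.bot) → ∀ g', ¬ wire g g'
  times_two : ∀ g, gtype g = GateType.times → ∃ g₁ g₂, g₁ ≠ g₂ ∧ wire g₁ g ∧ wire g₂ g ∧
      ∀ g', wire g' g → g' = g₁ ∨ g' = g₂
  cup_one : ∀ g, gtype g = GateType.cup → ∃ g', wire g' g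

/-- `Captures C g S` : the set `S` of variables belongs to the set `S(g)` captured by
gate `g`, following the inductive semantics of set circuits. -/
inductive Captures {V G : Type} (C : SetCircuit V G) : G → Set V → Prop
  | var {g} : C.gtype g = GateType.var → Captures C g (C.varLabel g)
  | top {g} : C.gtype g = GateType.top → Captures C g ∅
  | times {g g₁ g₂ S₁ S₂} : C.gtype g = GateType.times → C.wire g₁ g → C.wire g₂ g →
      g₁ ≠ g₂ → Captures C g₁ S₁ → Captures C g₂ S₂ → Captures C g (S₁ ∪ S₂)
  | cup {g g' S} : C.gtype g = GateType.cup → C.wire g' g → Captures C g' S → Captures C g S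

/-- `CupPath C g' g` : there is a wire-path from `g'` to `g` all of whose gates strictly
between `g'` and `g` are ∪-gates. -/
inductive CupPath {V G : Type} (C : SetCircuit V G) : G → G → Prop
  | single {g' g} : C.wire g' g → CupPath C g' g
  | cons {g' m g} : C.wire g' m → C.gtype m = GateType.cup → CupPath C m g → CupPath C g' g

/-- A v-tree: a binary tree whose leaves are labeled by sets of variables. -/
inductive VTree (V : Type) where
  | leaf (vars : Set V)
  | node (l r : VTree V)

/-- The subtree of a v-tree at a position (if any). -/
def VTree.sub {V : Type} : VTree V → BPos → Option (VTree V)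
  | t, [] => some t
  | VTree.leaf _, _ :: _ => none
  | VTree.node l r, b :: p => VTree.sub (if b then r else l) p

/-- Variables occurring in (the leaves of) a v-tree. -/
def VTree.vars {V : Type} : VTree V → Set V
  | VTree.leaf vs => vs
  | VTree.node l r => l.vars ∪ r.vars

/-- Variables occurring below a given position of a v-tree. -/
def VTree.varsAt {V : Type} (t : VTree V) (p : BPos) : Set V :=
  match t.sub p with
  | some s => s.vars
  | none => ∅

/-- A complete structured DNNF: a set circuit together with a v-tree and a structuring
function `σ` mapping each gate to a (valid) position of the v-tree (its box). -/
structure StructuredDNNF (V G : Type) extends SetCircuit V G where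
  vtree : VTree V
  σ : G → BPos
  σ_valid : ∀ g, (vtree.sub (σ g)).isSome
  var_leaf : ∀ g, gtype g = GateType.var →
      ∃ vs, vtree.sub (σ g) = some (VTree.leaf vs) ∧ varLabel g ⊆ vs
  var_nonempty : ∀ g, gtype g = GateType.var → (varLabel g).Nonempty
  wire_struct : ∀ g' g, wire g' g →
      σ g' = σ g ∨ (gtype g' = GateType.cup ∧ ∃ b, σ g' = σ g ++ [b])
  times_children : ∀ g, gtype g = GateType.times →
      (∃ g₁, wire g₁ g ∧ σ g₁ = σ g ++ [false]) ∧ (∃ g₂, wire g₂ g ∧ σ g₂ = σ g ++ [true])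
  leaves_disjoint : ∀ p₁ p₂ vs₁ vs₂, vtree.sub p₁ = some (VTree.leaf vs₁) →
      vtree.sub p₂ = some (VTree.leaf vs₂) → p₁ ≠ p₂ → Disjoint vs₁ vs₂

lemma VTree.sub_append {V : Type} (t : VTree V) (p q : BPos) :
    t.sub (p ++ q) = (t.sub p).bind (fun s => s.sub q) := by
  induction p generalizing t with
  | nil => simp [VTree.sub]
  | cons b p ih =>
    cases t with
    | leaf vs => simp [VTree.sub]
    | node l r => simpa [VTree.sub] using ih _

lemma VTree.sub_vars_subset {V : Type} {t : VTree V} {q : BPos} {s : VTree V}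
    (h : t.sub q = some s) : s.vars ⊆ t.vars := by
  induction q generalizing t with
  | nil => simp [VTree.sub] at h; subst h; exact subset_rfl
  | cons b q ih =>
    cases t with
    | leaf vs => simp [VTree.sub] at h
    | node l r =>
      simp only [VTree.sub] at h
      cases b with
      | false => exact (ih (by simpa using h)).trans Set.subset_union_left
      | true => exact (ih (by simpa using h)).trans Set.subset_union_right

lemma VTree.varsAt_append_subset {V : Type} (t : VTree V) (p q : BPos) :
    t.varsAt (p ++ q) ⊆ t.varsAt p := by
  intro v hv
  unfold VTree.varsAt at hv ⊢
  rw [VTree.sub_append] at hv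
  cases hp : t.sub p with
  | none => rw [hp] at hv; exact (Set.notMem_empty v hv).elim
  | some s =>
    rw [hp] at hv
    simp only [Option.bind_some] at hv
    cases hq : s.sub q with
    | none => rw [hq] at hv; exact (Set.notMem_empty v hv).elim
    | some s' => rw [hq] at hv; exact VTree.sub_vars_subset hq hv

lemma VTree.mem_vars_leaf {V : Type} {t : VTree V} {v : V} (h : v ∈ t.vars) :
    ∃ q vs, t.sub q = some (VTree.leaf vs) ∧ v ∈ vs := by
  induction t with
  | leaf vs => exact ⟨[], vs, rfl, h⟩
  | node l r ihl ihr =>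
    rcases h with h | h
    · obtain ⟨q, vs, hq, hv⟩ := ihl h
      exact ⟨false :: q, vs, by simpa [VTree.sub] using hq, hv⟩
    · obtain ⟨q, vs, hq, hv⟩ := ihr h
      exact ⟨true :: q, vs, by simpa [VTree.sub] using hq, hv⟩

lemma VTree.mem_varsAt_leaf {V : Type} {t : VTree V} {p : BPos} {v : V}
    (h : v ∈ t.varsAt p) : ∃ q vs, t.sub (p ++ q) = some (VTree.leaf vs) ∧ v ∈ vs := by
  unfold VTree.varsAt at h
  cases hp : t.sub p with
  | none => rw [hp] at h; exact absurd h (Set.notMem_empty v)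
  | some s =>
    rw [hp] at h
    obtain ⟨q, vs, hq, hv⟩ := VTree.mem_vars_leaf h
    exact ⟨q, vs, by rw [VTree.sub_append, hp, Option.bind_some]; exact hq, hv⟩

lemma disjoint_varsAt {V : Type} (t : VTree V)
    (hld : ∀ p₁ p₂ vs₁ vs₂, t.sub p₁ = some (VTree.leaf vs₁) →
      t.sub p₂ = some (VTree.leaf vs₂) → p₁ ≠ p₂ → Disjoint vs₁ vs₂)
    (p₁ p₂ : BPos) (hinc : ∀ q₁ q₂ : BPos, p₁ ++ q₁ ≠ p₂ ++ q₂) :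
    Disjoint (t.varsAt p₁) (t.varsAt p₂) := by
  rw [Set.disjoint_left]
  intro v h1 h2
  obtain ⟨q₁, vs₁, hq₁, hv₁⟩ := VTree.mem_varsAt_leaf h1
  obtain ⟨q₂, vs₂, hq₂, hv₂⟩ := VTree.mem_varsAt_leaf h2
  exact Set.disjoint_left.mp (hld _ _ _ _ hq₁ hq₂ (hinc q₁ q₂)) hv₁ hv₂

lemma disjoint_siblings {V G : Type} (D : StructuredDNNF V G) (p : BPos) :
    Disjoint (D.vtree.varsAt (p ++ [false])) (D.vtree.varsAt (p ++ [true])) := by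
  apply disjoint_varsAt _ D.leaves_disjoint
  intro q₁ q₂ h
  rw [List.append_assoc, List.append_assoc, List.append_cancel_left_eq] at h
  simp at h

/-- Any set captured by a non-⊤ gate is nonempty and contained in the variables of its box. -/
lemma capture_sub {V G : Type} (D : StructuredDNNF V G) {g : G} {S : Set V}
    (hc : Captures D.toSetCircuit g S) (ht : D.gtype g ≠ GateType.top) :
    S.Nonempty ∧ S ⊆ D.vtree.varsAt (D.σ g) := by
  induction hc with
  | @var g h =>
    obtain ⟨vs, hvs, hsub⟩ := D.var_leaf _ h
    refine ⟨D.var_nonempty _ h, ?_⟩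
    unfold VTree.varsAt; rw [hvs]; exact hsub
  | top h => exact absurd h ht
  | @times g a b S₁ S₂ h hw1 hw2 hne hc1 hc2 ih1 ih2 =>
    have t1 : D.gtype a ≠ GateType.top := fun ht' => D.const_no_output a (Or.inl ht') g hw1
    have t2 : D.gtype b ≠ GateType.top := fun ht' => D.const_no_output b (Or.inl ht') g hw2
    obtain ⟨hne1, hsub1⟩ := ih1 t1
    obtain ⟨hne2, hsub2⟩ := ih2 t2
    have key : ∀ g' : G, D.wire g' g → D.vtree.varsAt (D.σ g') ⊆ D.vtree.varsAt (D.σ g) := by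
      intro g' hw
      rcases D.wire_struct g' g hw with h' | ⟨_, c, h'⟩
      · rw [h']
      · rw [h']; exact VTree.varsAt_append_subset _ _ _
    exact ⟨hne1.mono Set.subset_union_left,
      Set.union_subset (hsub1.trans (key a hw1)) (hsub2.trans (key b hw2))⟩
  | @cup g g' S h hw hc ih =>
    have t' : D.gtype g' ≠ GateType.top := fun ht' => D.const_no_output g' (Or.inl ht') g hw
    obtain ⟨hne, hsub⟩ := ih t'
    refine ⟨hne, hsub.trans ?_⟩
    rcases D.wire_struct g' g hw with h' | ⟨_, c, h'⟩
    · rw [h']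
    · rw [h']; exact VTree.varsAt_append_subset _ _ _

/-- Structure of sets captured by a ×-gate. -/
lemma times_capture {V G : Type} (D : StructuredDNNF V G) {g : G} {S : Set V}
    (hc : Captures D.toSetCircuit g S) (ht : D.gtype g = GateType.times) :
    ∃ S₁ S₂, S = S₁ ∪ S₂ ∧ S₁.Nonempty ∧ S₁ ⊆ D.vtree.varsAt (D.σ g ++ [false]) ∧
      S₂.Nonempty ∧ S₂ ⊆ D.vtree.varsAt (D.σ g ++ [true]) := by
  cases hc with
  | var h => rw [h] at ht; exact absurd ht (by simp)
  | top h => rw [h] at ht; exact absurd ht (by simp)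
  | cup h => rw [h] at ht; exact absurd ht (by simp)
  | @times _ a b S₁ S₂ h hw1 hw2 hne hc1 hc2 =>
    obtain ⟨u, v, huv, hwu, hwv, hall⟩ := D.times_two g ht
    obtain ⟨⟨gL, hwL, hσL⟩, ⟨gR, hwR, hσR⟩⟩ := D.times_children g ht
    have hLR : gL ≠ gR := fun h' => by rw [h', hσR] at hσL; simp at hσL
    -- {a, b} = {u, v} = {gL, gR}
    have hab : ∀ x : G, D.wire x g → x = u ∨ x = v := hall
    have t1 : D.gtype a ≠ GateType.top := fun ht' => D.const_no_output a (Or.inl ht') g hw1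
    have t2 : D.gtype b ≠ GateType.top := fun ht' => D.const_no_output b (Or.inl ht') g hw2
    obtain ⟨hne1, hsub1⟩ := capture_sub D hc1 t1
    obtain ⟨hne2, hsub2⟩ := capture_sub D hc2 t2
    have pair : ∀ x y : G, D.wire x g → D.wire y g → x ≠ y → ∀ z : G, D.wire z g →
        z = x ∨ z = y := by
      intro x y hwx hwy hxy z hwz
      rcases hab x hwx with hx | hx <;> rcases hab y hwy with hy | hy <;>
        rcases hab z hwz with hz | hz <;> simp_all
    -- gL is a or b; gR is the other
    rcases pair a b hw1 hw2 hne gL hwL with hL | hL <;>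
      rcases pair a b hw1 hw2 hne gR hwR with hR | hR
    · exact absurd (hL.trans hR.symm) hLR
    · exact ⟨S₁, S₂, rfl, hne1, by rw [← hσL, hL]; exact hsub1,
        hne2, by rw [← hσR, hR]; exact hsub2⟩
    · refine ⟨S₂, S₁, Set.union_comm _ _, hne2, by rw [← hσL, hL]; exact hsub2,
        hne1, by rw [← hσR, hR]; exact hsub1⟩
    · exact absurd (hL.trans hR.symm) hLR

/-- Helper: if the box of g₁ is a strict prefix of the box of g₂, a common capture
is impossible. -/
lemma prefix_case {V G : Type} (D : StructuredDNNF V G) (g₁ g₂ : G) (S : Set V)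
    (h₁ : D.gtype g₁ = GateType.var ∨ D.gtype g₁ = GateType.times)
    (hS1 : Captures D.toSetCircuit g₁ S) (hS2 : Captures D.toSetCircuit g₂ S)
    (ht₂ : D.gtype g₂ ≠ GateType.top)
    (b : Bool) (rest : BPos) (hpre : D.σ g₂ = D.σ g₁ ++ (b :: rest)) : False := by
  rcases h₁ with hv | htimes
  · -- g₁ is a var-gate: its box is a leaf, so no strict descendant exists
    obtain ⟨vs, hvs, _⟩ := D.var_leaf _ hv
    have := D.σ_valid g₂
    rw [hpre, VTree.sub_append, hvs, Option.bind_some] at this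
    simp [VTree.sub] at this
  · obtain ⟨S₁, S₂, hSeq, hne1, hsub1, hne2, hsub2⟩ := times_capture D hS1 htimes
    obtain ⟨_, hsub⟩ := capture_sub D hS2 ht₂
    have hsub' : S ⊆ D.vtree.varsAt (D.σ g₁ ++ [b]) := by
      have : D.σ g₂ = (D.σ g₁ ++ [b]) ++ rest := by simpa using hpre
      rw [this] at hsub
      exact hsub.trans (VTree.varsAt_append_subset _ _ _)
    have hdisj := disjoint_siblings D (D.σ g₁)
    cases b with
    | false =>
      obtain ⟨v, hv⟩ := hne2
      exact Set.disjoint_right.mp hdisj (hsub2 hv)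
        (hsub' (hSeq ▸ (Set.mem_union_right _ hv : v ∈ S₁ ∪ S₂)))
    | true =>
      obtain ⟨v, hv⟩ := hne1
      exact Set.disjoint_left.mp hdisj (hsub1 hv)
        (hsub' (hSeq ▸ (Set.mem_union_left _ hv : v ∈ S₁ ∪ S₂)))

/-- two var- or ×-gates lying in distinct boxes capture disjoint sets of
assignments. -/
theorem stmt7 {V G : Type} (D : StructuredDNNF V G) (g₁ g₂ : G)
    (h₁ : D.gtype g₁ = GateType.var ∨ D.gtype g₁ = GateType.times)
    (h₂ : D.gtype g₂ = GateType.var ∨ D.gtype g₂ = GateType.times)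
    (hbox : D.σ g₁ ≠ D.σ g₂) :
    Disjoint {S | Captures D.toSetCircuit g₁ S} {S | Captures D.toSetCircuit g₂ S} := by
  rw [Set.disjoint_left]
  intro S hS1 hS2
  simp only [Set.mem_setOf_eq] at hS1 hS2
  have ht₁ : D.gtype g₁ ≠ GateType.top := by rcases h₁ with h | h <;> simp [h]
  have ht₂ : D.gtype g₂ ≠ GateType.top := by rcases h₂ with h | h <;> simp [h]
  by_cases hp12 : D.σ g₁ <+: D.σ g₂
  · obtain ⟨t, ht⟩ := hp12
    cases t with
    | nil => exact hbox (by simpa using ht)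
    | cons b rest => exact prefix_case D g₁ g₂ S h₁ hS1 hS2 ht₂ b rest ht.symm
  by_cases hp21 : D.σ g₂ <+: D.σ g₁
  · obtain ⟨t, ht⟩ := hp21
    cases t with
    | nil => exact hbox (by simpa using ht.symm)
    | cons b rest => exact prefix_case D g₂ g₁ S h₂ hS2 hS1 ht₁ b rest ht.symm
  -- incomparable boxes
  have hinc : ∀ q₁ q₂ : BPos, D.σ g₁ ++ q₁ ≠ D.σ g₂ ++ q₂ := by
    intro q₁ q₂ h
    rcases List.prefix_or_prefix_of_prefix (⟨q₁, rfl⟩ : D.σ g₁ <+: D.σ g₁ ++ q₁)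
      (h ▸ ⟨q₂, rfl⟩ : D.σ g₂ <+: D.σ g₁ ++ q₁) with h' | h'
    · exact hp12 h'
    · exact hp21 h'
  have hdisj := disjoint_varsAt _ D.leaves_disjoint _ _ hinc
  obtain ⟨⟨v, hv⟩, hsub1⟩ := capture_sub D hS1 ht₁
  obtain ⟨_, hsub2⟩ := capture_sub D hS2 ht₂
  exact Set.disjoint_left.mp hdisj (hsub1 hv) (hsub2 hv)
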